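/- arXiv:1309.2401 — 3 statements merged into one kernel-verified Lean document; each statement's English description precedes it below -/
import Mathlib

section
/- If a separable Hausdorff topological space X contains a cocountable subset homeomorphic to the ordinal space [0, ω₁], then X admits no separately continuous mean operation, i.e., no separately continuous map μ : X × X → X satisfying μ(x,x) = x and μ(x,y) = μ(y,x) for all x, y ∈ X. -/
open Ordinal Topology

/-- `f` is separately continuous as a function of two variables. -/
def SepCts {X Y : Type*} [TopologicalSpace X] [TopologicalSpace Y]
    (f : X → X → Y) : Prop :=
  ∀ a : X, Continuous (fun x => f a x) ∧ Continuous (fun x => f x a)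

/-!
Let `e : [0, ω₁] → X` be the embedding onto the cocountable set. For fixed `q`, the map
`g γ = μ q (e γ)` is continuous on `[0, ω₁]`. If `g` takes the value `g ω₁` cofinally often, it is
constant on a club. Otherwise all fibres of `g` are countable; since `X` minus the arc is
countable, `g` maps a tail of `ω₁` into the arc, `g γ = e (f γ)`, and closing off under `f` and
under the bounds of its fibres produces a club of `δ` with `f δ = δ`, i.e. `g = e` on a club.

A countable dense set `D` meets the arc in a countable, hence bounded, set of points, so every
point of the arc beyond some countable ordinal is a limit of the countably many points `q ∈ D` off
the arc. Intersecting their clubs gives a club `C`; by separate continuity, every such limit `x`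
satisfies either `μ x y = y` for all `y ∈ e '' C` or `μ x y = μ x (e ω₁)` for all `y ∈ e '' C`.
Each alternative holds for at most one point of `e '' C` (by commutativity, resp. idempotence and
commutativity), yet `C` contains three ordinals beyond that bound.
-/

open Set Filter Cardinal Order

theorem IsCofinal.exists_gt {α : Type*} [LinearOrder α] [NoMaxOrder α] {s : Set α}
    (hs : IsCofinal s) (a : α) : ∃ b ∈ s, a < b :=
  not_bddAbove_iff.1 (not_bddAbove_iff_isCofinal.2 hs) a

namespace Ordinal

instance : Nonempty (Iio ω₁) := ⟨⟨0, omega_pos 1⟩⟩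

instance : NoMaxOrder (Iio ω₁) :=
  ⟨fun a => ⟨⟨succ a, (isSuccLimit_omega 1).succ_lt a.2⟩, Subtype.mk_lt_mk.2 (lt_succ a.1)⟩⟩

theorem countable_Iio_of_lt_omega_one {o : Ordinal} (ho : o < ω₁) : (Iio o).Countable := by
  rw [← le_aleph0_iff_set_countable, Cardinal.mk_Iio_ordinal, lift_le_aleph0,
    ← Order.lt_succ_iff, succ_aleph0]
  exact lt_omega_iff_card_lt.1 ho

theorem cof_Iio_omega_one : Order.cof (Iio ω₁) = ℵ₁ := by
  rw [cof_Iio]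
  simp

theorem countable_iff_not_isCofinal {s : Set (Iio ω₁)} : s.Countable ↔ ¬ IsCofinal s := by
  constructor
  · intro hs hcof
    have := (cof_le hcof).trans (le_aleph0_iff_set_countable.2 hs)
    rw [cof_Iio_omega_one] at this
    exact aleph0_lt_aleph_one.not_ge this
  · rw [not_isCofinal_iff]
    rintro ⟨a, ha⟩
    exact ((countable_Iio_of_lt_omega_one a.2).preimage Subtype.val_injective).mono ha

theorem countable_Iic_omega_one (a : Iio ω₁) : (Iic a).Countable := by
  obtain ⟨b, hab⟩ := exists_gt a
  exact countable_iff_not_isCofinal.2 <| not_isCofinal_iff.2 ⟨b, fun _ h => lt_of_le_of_lt h hab⟩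

theorem omega_one_mem_closure_of_isCofinal {s : Set (Iio ω₁)} (hs : IsCofinal s) :
    ω₁ ∈ closure (Subtype.val '' s) := by
  refine IsLUB.mem_closure ⟨?_, fun b hb => ?_⟩ (hs.nonempty.image _)
  · rintro _ ⟨γ, -, rfl⟩
    exact γ.2.le
  · by_contra! hb'
    obtain ⟨γ, hγ, hbγ⟩ := hs.exists_gt ⟨b, hb'⟩
    exact (hb ⟨γ, hγ, rfl⟩).not_gt hbγ

theorem exists_strictMono_tendsto (F : Iio ω₁ → Iio ω₁) (a : Iio ω₁) :
    ∃ (d : ℕ → Iio ω₁) (δ : Iio ω₁), StrictMono d ∧ a ≤ d 0 ∧ (∀ n, F (d n) ≤ d (n + 1)) ∧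
      Tendsto d atTop (𝓝 δ) := by
  let G : Iio ω₁ → Iio ω₁ := fun x =>
    ⟨succ (max x (F x)), (isSuccLimit_omega 1).succ_lt (max_lt x.2 (F x).2)⟩
  have hG : ∀ x, x < G x ∧ F x < G x := fun x =>
    max_lt_iff.1 (lt_succ (max x.1 (F x).1))
  let d : ℕ → Iio ω₁ := fun n => G^[n] a
  have hd : ∀ n, d (n + 1) = G (d n) := fun n => Function.iterate_succ_apply' G n a
  have hmono : StrictMono d := strictMono_nat_of_lt_succ fun n => hd n ▸ (hG _).1
  refine ⟨d, ⟨⨆ n, (d n : Ordinal), iSup_lt_omega_one fun n => (d n).2⟩, hmono, le_rfl,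
    fun n => hd n ▸ (hG _).2.le, ?_⟩
  exact tendsto_subtype_rng.2 <|
    tendsto_atTop_ciSup (fun _ _ h => hmono.monotone h) bddAbove_of_small

end Ordinal

theorem IsClosed.dirSupClosed {α : Type*} [LinearOrder α] [TopologicalSpace α] [OrderTopology α]
    {s : Set α} (hs : IsClosed s) : DirSupClosed s :=
  dirSupClosed_iff_of_linearOrder.2 fun _ hds hd _ ha =>
    hs.closure_subset_iff.2 hds (ha.mem_closure hd)

theorem continuous_projIic {α : Type*} [LinearOrder α] [TopologicalSpace α]
    [OrderClosedTopology α] {b : α} : Continuous (projIic b) :=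
  (continuous_const.min continuous_id).subtype_mk _

section ContinuousOnOmegaOne

variable {X : Type*} [TopologicalSpace X] [T2Space X] {g e : Ordinal → X}

theorem isClub_setOf_eq {g₁ g₂ : Ordinal → X} (h₁ : Continuous g₁) (h₂ : Continuous g₂)
    (h : IsCofinal {γ : Iio ω₁ | g₁ γ = g₂ γ}) : IsClub {γ : Iio ω₁ | g₁ γ = g₂ γ} :=
  ⟨(isClosed_eq (h₁.comp continuous_subtype_val) (h₂.comp continuous_subtype_val)).dirSupClosed, h⟩

theorem eq_of_isCofinal_setOf_eq (hg : Continuous g) {x : X}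
    (h : IsCofinal {γ : Iio ω₁ | g γ = x}) : g ω₁ = x :=
  closure_minimal (by rintro _ ⟨γ, hγ, rfl⟩; exact hγ) (isClosed_eq hg continuous_const)
    (omega_one_mem_closure_of_isCofinal h)

theorem countable_setOf_eq_of_not_isCofinal (hg : Continuous g)
    (h : ¬ IsCofinal {γ : Iio ω₁ | g γ = g ω₁}) (x : X) : {γ : Iio ω₁ | g γ = x}.Countable :=
  countable_iff_not_isCofinal.2 fun hx => by
    obtain rfl := eq_of_isCofinal_setOf_eq hg hx
    exact h hx

theorem isCofinal_setOf_eq_of_countable_fibers (hg : Continuous g) (he : Continuous e)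
    (hfib : ∀ x, {γ : Iio ω₁ | g γ = x}.Countable) (hA : (e '' Iio ω₁)ᶜ.Countable) :
    IsCofinal {γ : Iio ω₁ | g γ = e γ} := by
  have hbdd : ∀ s : Set X, s.Countable → ∃ b : Iio ω₁, ∀ γ : Iio ω₁, g γ ∈ s → γ < b :=
    fun s hs => not_isCofinal_iff.1 <| countable_iff_not_isCofinal.1 <|
      (hs.biUnion fun x _ => hfib x).mono fun γ (hγ : g γ ∈ s) =>
        mem_biUnion hγ (rfl : g γ = g γ)
  obtain ⟨β, hβ⟩ := hbdd _ hA
  have hmem : ∀ γ : Iio ω₁, β ≤ γ → ∃ ζ : Iio ω₁, g γ = e ζ := fun γ hγ => by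
    by_contra! h
    exact (hβ γ fun ⟨ζ, hζ, hgζ⟩ => h ⟨ζ, hζ⟩ hgζ.symm).not_ge hγ
  choose! f hf using hmem
  choose b hb using fun ζ : Iio ω₁ =>
    hbdd ((fun ξ : Iio ω₁ => e ξ) '' Iic ζ) ((countable_Iic_omega_one ζ).image _)
  intro a
  obtain ⟨d, δ, hd, had, hdF, hdδ⟩ :=
    exists_strictMono_tendsto (fun x => max (f x) (b x)) (max a β)
  have had' : ∀ n, max a β ≤ d n := fun n => had.trans (hd.monotone n.zero_le)
  -- otherwise `d (n + 2)` is in the preimage of `e '' Iic (d n)`, bounded by `b (d n) ≤ d (n + 1)`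
  have hlow : ∀ n, d n ≤ f (d (n + 2)) := fun n => by
    by_contra! h
    have := hb (d n) (d (n + 2)) ⟨f (d (n + 2)), h.le, (hf _ (le_of_max_le_right (had' _))).symm⟩
    exact (this.trans_le ((le_max_right _ _).trans (hdF n))).not_gt (hd (n + 1).lt_succ_self)
  have hup : ∀ n, f (d (n + 2)) ≤ d (n + 3) := fun n => (le_max_left _ _).trans (hdF (n + 2))
  have hfδ : Tendsto (fun n => f (d (n + 2))) atTop (𝓝 δ) :=
    tendsto_of_tendsto_of_tendsto_of_le_of_le hdδ ((tendsto_add_atTop_iff_nat 3).2 hdδ) hlow hup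
  have hgδ : Tendsto (fun n => g (d (n + 2))) atTop (𝓝 (g δ)) :=
    ((hg.comp continuous_subtype_val).tendsto δ).comp ((tendsto_add_atTop_iff_nat 2).2 hdδ)
  have heδ : Tendsto (fun n => g (d (n + 2))) atTop (𝓝 (e δ)) := by
    simp only [hf _ (le_of_max_le_right (had' _))]
    exact ((he.comp continuous_subtype_val).tendsto δ).comp hfδ
  exact ⟨δ, tendsto_nhds_unique hgδ heδ,
    le_of_max_le_left (had.trans (hd.monotone.ge_of_tendsto hdδ 0))⟩

theorem exists_isClub_eq_const_or_eq (hg : Continuous g) (he : Continuous e)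
    (hA : (e '' Iic ω₁)ᶜ.Countable) :
    ∃ K : Set (Iio ω₁), IsClub K ∧ ((∀ γ ∈ K, g γ = g ω₁) ∨ ∀ γ ∈ K, g γ = e γ) := by
  by_cases hconst : IsCofinal {γ : Iio ω₁ | g γ = g ω₁}
  · exact ⟨_, isClub_setOf_eq hg continuous_const hconst, Or.inl fun _ => id⟩
  have hA' : (e '' Iio ω₁)ᶜ.Countable := (hA.insert (e ω₁)).mono <| by
    rw [← Iio_insert, image_insert_eq]
    intro x hx
    by_cases h : x = e ω₁
    exacts [.inl h, .inr fun h' => h'.elim h hx]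
  exact ⟨_, isClub_setOf_eq hg he <| isCofinal_setOf_eq_of_countable_fibers hg he
    (countable_setOf_eq_of_not_isCofinal hg hconst) hA', Or.inr fun _ => id⟩

end ContinuousOnOmegaOne

section Mean

variable {X : Type*} {μ : X → X → X}

theorem subsingleton_inter_setOf_forall_eq_right (hcomm : ∀ x y, μ x y = μ y x) (Y : Set X) :
    (Y ∩ {x | ∀ y ∈ Y, μ x y = y}).Subsingleton := fun x hx x' hx' => by
  rw [← hx'.2 x hx.1, hcomm, hx.2 x' hx'.1]

theorem subsingleton_inter_setOf_forall_eq_const (hidem : ∀ x, μ x x = x)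
    (hcomm : ∀ x y, μ x y = μ y x) (Y : Set X) (z : X) :
    (Y ∩ {x | ∀ y ∈ Y, μ x y = μ x z}).Subsingleton := fun x hx x' hx' => by
  rw [← hidem x, hx.2 x hx.1, ← hx.2 x' hx'.1, hcomm, hx'.2 x hx.1, ← hx'.2 x' hx'.1, hidem]

variable [TopologicalSpace X] [T2Space X]

theorem SepCts.isClosed_setOf_forall_eq_right (hμ : SepCts μ) (Y : Set X) :
    IsClosed {x | ∀ y ∈ Y, μ x y = y} := by
  simp only [ofPred_forall]
  exact isClosed_biInter fun y _ => isClosed_eq (hμ y).2 continuous_const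

theorem SepCts.isClosed_setOf_forall_eq_const (hμ : SepCts μ) (Y : Set X) (z : X) :
    IsClosed {x | ∀ y ∈ Y, μ x y = μ x z} := by
  simp only [ofPred_forall]
  exact isClosed_biInter fun y _ => isClosed_eq (hμ y).2 (hμ z).2

end Mean

theorem Set.Subsingleton.eq_or_eq_or_eq_of_mem_union {α : Type*} {s t : Set α}
    (hs : s.Subsingleton) (ht : t.Subsingleton) {a b c : α} (ha : a ∈ s ∪ t) (hb : b ∈ s ∪ t)
    (hc : c ∈ s ∪ t) : a = b ∨ a = c ∨ b = c := by
  rcases ha with ha | ha <;> rcases hb with hb | hb <;> rcases hc with hc | hc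
  all_goals first
    | exact .inl (hs ha hb) | exact .inl (ht ha hb) | exact .inr (.inl (hs ha hc))
    | exact .inr (.inl (ht ha hc)) | exact .inr (.inr (hs hb hc)) | exact .inr (.inr (ht hb hc))

section Main

variable {X : Type*} [TopologicalSpace X] [T2Space X] {e : Ordinal → X}

theorem exists_forall_gt_mem_closure_diff_image (he : Continuous e) (hinj : InjOn e (Iic ω₁))
    {D : Set X} (hD : Dense D) (hDc : D.Countable) :
    ∃ ρ : Iio ω₁, ∀ γ : Iio ω₁, ρ < γ → e γ ∈ closure (D \ e '' Iic ω₁) := by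
  have hS : {γ : Iio ω₁ | e γ ∈ D}.Countable := (mapsTo_preimage _ D).countable_of_injOn
    (hinj.comp Subtype.val_injective.injOn fun γ _ => mem_Iic.2 γ.2.le) hDc
  obtain ⟨ρ, hρ⟩ := not_isCofinal_iff.1 (countable_iff_not_isCofinal.1 hS)
  let Z : Set Ordinal := Iic ρ ∪ {ω₁}
  have hZ : IsClosed (e '' Z) := by
    have hIic : IsCompact (Iic (ρ : Ordinal)) := Icc_bot (a := ρ.1) ▸ isCompact_Icc
    exact ((hIic.union isCompact_singleton).image he).isClosed
  have hDZ : D ∩ e '' Iic ω₁ ⊆ e '' Z := by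
    rintro _ ⟨hD, o, ho, rfl⟩
    rcases (mem_Iic.1 ho).lt_or_eq with ho | rfl
    · exact ⟨o, .inl (hρ ⟨o, ho⟩ hD).le, rfl⟩
    · exact ⟨_, .inr rfl, rfl⟩
  refine ⟨ρ, fun γ hργ => ?_⟩
  have hγZ : e γ ∉ e '' Z := by
    rintro ⟨o, ho, heq⟩
    have hoω : o ≤ ω₁ := ho.elim (fun h => h.trans ρ.2.le) fun h => h.le
    obtain rfl : o = γ := hinj hoω (mem_Iic.2 γ.2.le) heq
    exact ho.elim (fun h => h.not_gt hργ) fun h => γ.2.ne h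
  have hγ := hD.closure_eq ▸ mem_univ (e γ)
  rw [← inter_union_sdiff D (e '' Iic ω₁), closure_union] at hγ
  exact hγ.resolve_left fun h => hγZ (closure_minimal hDZ hZ h)

theorem not_exists_sepCts_mean_of_injOn_Iic [TopologicalSpace.SeparableSpace X]
    (he : Continuous e) (hinj : InjOn e (Iic ω₁)) (hA : (e '' Iic ω₁)ᶜ.Countable) :
    ¬ ∃ μ : X → X → X, SepCts μ ∧ (∀ x, μ x x = x) ∧ (∀ x y, μ x y = μ y x) := by
  rintro ⟨μ, hμ, hidem, hcomm⟩
  obtain ⟨D, hDc, hD⟩ := TopologicalSpace.exists_countable_dense X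
  obtain ⟨ρ, hρ⟩ := exists_forall_gt_mem_closure_diff_image he hinj hD hDc
  let D' := D \ e '' Iic ω₁
  have : Countable D' := (hDc.mono sdiff_subset).to_subtype
  choose K hK hKe using fun q => exists_isClub_eq_const_or_eq ((hμ q).1.comp he) he hA
  have hC : IsClub (⋂ q : D', K q) :=
    .iInter_of_countable (cof_Iio_omega_one ▸ aleph0_lt_aleph_one.ne') fun q => hK q
  let Y := (fun γ : Iio ω₁ => e γ) '' ⋂ q : D', K q
  let T₁ := {x | ∀ y ∈ Y, μ x y = y}
  let T₂ := {x | ∀ y ∈ Y, μ x y = μ x (e ω₁)}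
  have hD'T : D' ⊆ T₁ ∪ T₂ := fun q hq => by
    refine (hKe q).symm.imp ?_ ?_ <;>
      exact fun h => forall_mem_image.2 fun γ hγ => h γ (mem_iInter.1 hγ ⟨q, hq⟩)
  have hT : ∀ γ ∈ ⋂ q : D', K q, ρ < γ → e γ ∈ (Y ∩ T₁) ∪ (Y ∩ T₂) := fun γ hγ hργ => by
    rw [← inter_union_distrib_left]
    exact ⟨⟨γ, hγ, rfl⟩, closure_minimal hD'T ((hμ.isClosed_setOf_forall_eq_right Y).union
      (hμ.isClosed_setOf_forall_eq_const Y _)) (hρ γ hργ)⟩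
  obtain ⟨γ₁, hγ₁, hργ₁⟩ := hC.isCofinal.exists_gt ρ
  obtain ⟨γ₂, hγ₂, h₁₂⟩ := hC.isCofinal.exists_gt γ₁
  obtain ⟨γ₃, hγ₃, h₂₃⟩ := hC.isCofinal.exists_gt γ₂
  have he' : Function.Injective fun γ : Iio ω₁ => e γ := fun γ γ' h =>
    Subtype.ext (hinj (mem_Iic.2 γ.2.le) (mem_Iic.2 γ'.2.le) h)
  rcases (subsingleton_inter_setOf_forall_eq_right hcomm Y).eq_or_eq_or_eq_of_mem_union
    (subsingleton_inter_setOf_forall_eq_const hidem hcomm Y _) (hT γ₁ hγ₁ hργ₁)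
    (hT γ₂ hγ₂ (hργ₁.trans h₁₂)) (hT γ₃ hγ₃ (hργ₁.trans (h₁₂.trans h₂₃))) with h | h | h
  · exact h₁₂.ne (he' h)
  · exact (h₁₂.trans h₂₃).ne (he' h)
  · exact h₂₃.ne (he' h)

end Main

theorem no_sep_cts_mean (X : Type*) [TopologicalSpace X] [T2Space X]
    [TopologicalSpace.SeparableSpace X]
    (A : Set X) (hAcc : (Aᶜ).Countable)
    (hA : Nonempty (A ≃ₜ (Set.Iic (ω_ 1) : Set Ordinal))) :
    ¬ ∃ μ : X → X → X, SepCts μ ∧ (∀ x, μ x x = x) ∧ (∀ x y, μ x y = μ y x) := by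
  obtain ⟨φ⟩ := hA
  let e : Ordinal → X := fun o => φ.symm (projIic ω₁ o)
  have he : Continuous e := continuous_subtype_val.comp (φ.symm.continuous.comp continuous_projIic)
  have hinj : InjOn e (Iic ω₁) := fun o ho o' ho' h => by
    simpa [projIic_of_mem ho, projIic_of_mem ho'] using φ.symm.injective (Subtype.ext h)
  have hAe : A ⊆ e '' Iic ω₁ := fun x hx => ⟨φ ⟨x, hx⟩, (φ ⟨x, hx⟩).2, by simp [e, projIic_coe]⟩
  exact not_exists_sepCts_mean_of_injOn_Iic he hinj (hAcc.mono (compl_subset_compl.2 hAe))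
end

section
/- If a separable Hausdorff topological space X contains a cocountable subset homeomorphic to [0, ω₁], then for every n ≥ 2, X admits no diagonally continuous n-mean μ : Xⁿ → X. -/
open Ordinal Topology

/-- `f : Xⁿ → Y` is diagonally continuous: for every `g : X → Xⁿ` each of whose
components is a constant function or the identity, `f ∘ g` is continuous. -/
def DiagCts {X Y : Type*} [TopologicalSpace X] [TopologicalSpace Y] {n : ℕ}
    (f : (Fin n → X) → Y) : Prop :=
  ∀ g : Fin n → X → X,
    (∀ i, (∃ c, ∀ x, g i x = c) ∨ (∀ x, g i x = x)) →
    Continuous (fun x => f (fun i => g i x))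

/-- `μ : Xⁿ → X` is an `n`-mean: idempotent on the diagonal and invariant under
all permutations of its arguments. -/
def IsNMean {X : Type*} {n : ℕ} (μ : (Fin n → X) → X) : Prop :=
  (∀ x : X, μ (fun _ => x) = x) ∧
    ∀ (σ : Equiv.Perm (Fin n)) (x : Fin n → X), μ (x ∘ σ) = μ x

/-!
Write `E` for a parametrization of the copy of `[0, ω₁]` and `Ω = E ω₁`. The key fact is a
dichotomy for continuous maps `h : [0, ω₁] → X`: on a club, either `h` is constantly `h ω₁`, or
`h ω₁ = Ω` and `h = E`. By continuity at `ω₁`, every value other than `h ω₁` is taken only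
boundedly often below `ω₁`, and countably many bounds below `ω₁` have a common bound; so `h`
eventually avoids, apart from `h ω₁`, the countably many points off the copy and each countable
piece `E '' [0, w]`. If `h ω₁ ≠ Ω`, separating `h ω₁` from `Ω` then makes `h` eventually
constant. If `h` eventually avoids `Ω`, then `h γ = E (p γ)` with `p γ → ω₁`, and a closing-off
sequence produces cofinally many fixed points `h γ = E γ`.

Apply this to `γ ↦ μ(E γ, …, E γ, Ω, …, Ω)` with `k` entries `E γ`, whose value is `Ω` for
`k = 0` and `E γ` for `k = n`, and take the least `k` with value `E γ`. Along the copy, either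
`Ω` is a two-sided unit of the separately continuous operation `R(x, y) = μ(x, y, Ω, …, Ω)`, or
`Ω` is two-sided absorbing for `R(x, y) = μ(x, y, …, y, Ω, …, Ω)` while `R` is idempotent. Both
are impossible in a separable space: split a countable dense set according to the dichotomy for
`β ↦ R(E β, q)`, and compare `R(E β, ·)` with `R(Ω, ·)` on the closures of the two parts.
-/

open Set Filter

universe u

theorem Dense.mem_closure_or_mem_closure_diff {X : Type*} [TopologicalSpace X] {Q : Set X}
    (hQ : Dense Q) (P : Set X) (x : X) : x ∈ closure P ∨ x ∈ closure (Q \ P) := by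
  rw [← mem_union, ← closure_union, union_sdiff_self]
  exact hQ.mono subset_union_right x

section Mean

variable {X : Type*} {n : ℕ} {μ : (Fin n → X) → X}

theorem DiagCts.continuous_ite [TopologicalSpace X] (hμ : DiagCts μ) (p : Fin n → Prop)
    [DecidablePred p] (v : Fin n → X) : Continuous fun x => μ fun i => if p i then x else v i :=
  hμ (fun i x => if p i then x else v i) fun i => by
    by_cases hp : p i
    · exact .inr fun x => if_pos hp
    · exact .inl ⟨v i, fun _ => if_neg hp⟩

theorem DiagCts.continuous_ite_ite [TopologicalSpace X] (hμ : DiagCts μ) (p q : Fin n → Prop)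
    [DecidablePred p] [DecidablePred q] (x z : X) :
    Continuous fun y => μ fun i => if p i then x else if q i then y else z :=
  hμ (fun i y => if p i then x else if q i then y else z) fun i => by
    by_cases hp : p i
    · exact .inl ⟨x, fun _ => if_pos hp⟩
    by_cases hq : q i
    · exact .inr fun y => by rw [if_neg hp, if_pos hq]
    · exact .inl ⟨z, fun _ => by rw [if_neg hp, if_neg hq]⟩

theorem IsNMean.apply_ite_mem_eq_of_card_eq (hμ : IsNMean μ) {S T : Finset (Fin n)}
    (h : S.card = T.card) (x y : X) :
    μ (fun i => if i ∈ S then x else y) = μ (fun i => if i ∈ T then x else y) := by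
  obtain ⟨σ, rfl⟩ := Equiv.Perm.exists_map_finset_eq S T h
  refine Eq.trans ?_ (hμ.2 σ _)
  congr 1
  funext i
  simp

open Finset in
theorem IsNMean.apply_ite_lt_one_ite (hμ : IsNMean μ) {k : ℕ} (hk : k ≤ n) (x z : X) :
    μ (fun i : Fin n => if (i : ℕ) < 1 then z else if (i : ℕ) < k then x else z) =
      μ (fun i => if (i : ℕ) < k - 1 then x else z) := by
  have hcard : #{i : Fin n | 1 ≤ (i : ℕ) ∧ (i : ℕ) < k} = #{i : Fin n | (i : ℕ) < k - 1} := by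
    obtain _ | m := n
    · simp
    · simp [Fin.card_filter_univ_succ, Fin.card_filter_val_lt, ← Nat.lt_sub_iff_add_lt]
      split_ifs <;> omega
  convert hμ.apply_ite_mem_eq_of_card_eq hcard x z using 2 <;> funext i
  · simp only [Finset.mem_filter, Finset.mem_univ, true_and]
    split_ifs <;> first | rfl | (exfalso; omega)
  · simp

end Mean

namespace Ordinal

open Cardinal in
theorem countable_Iic_of_lt_omega_one {w : Ordinal.{u}} (hw : w < ω₁) : (Iic w).Countable := by
  rw [← Order.Iio_succ, ← countable_coe_iff, ← mk_le_aleph0_iff, Cardinal.mk_Iio_ordinal,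
    ← lift_aleph0.{u + 1, u}, Cardinal.lift_le, ← Order.lt_succ_iff, succ_aleph0, ← lt_ord,
    ord_aleph]
  exact (Cardinal.isSuccLimit_omega 1).succ_lt hw

theorem nhdsLT_omega_one_basis : (𝓝[<] (ω₁ : Ordinal.{u})).HasBasis (· < ω₁) (Ioo · ω₁) :=
  nhdsLT_basis_of_exists_lt ⟨0, omega_pos 1⟩

instance : CountableInterFilter (𝓝[<] (ω₁ : Ordinal.{u})) where
  countable_sInter_mem S hS hmem := by
    simp only [nhdsLT_omega_one_basis.mem_iff] at hmem ⊢
    choose! b hb hbS using hmem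
    have : Countable S := hS.to_subtype
    refine ⟨⨆ s : S, b s, iSup_lt_omega_one fun s => hb s s.2,
      fun γ hγ s hs => hbS s hs ⟨?_, hγ.2⟩⟩
    exact (le_ciSup bddAbove_of_small (⟨s, hs⟩ : S)).trans_lt hγ.1

theorem iterate_mem_Ico {g : Ordinal.{u} → Ordinal.{u}} {a : Ordinal.{u}} (ha : a < ω₁)
    (hg : ∀ b ∈ Ico a ω₁, b < g b ∧ g b < ω₁) (k : ℕ) : g^[k] a ∈ Ico a ω₁ := by
  induction k with
  | zero => exact ⟨le_rfl, ha⟩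
  | succ k ih =>
    rw [Function.iterate_succ_apply']
    exact ⟨ih.1.trans (hg _ ih).1.le, (hg _ ih).2⟩

theorem exists_tendsto_iterate {g : Ordinal.{u} → Ordinal.{u}} {a : Ordinal.{u}} (ha : a < ω₁)
    (hg : ∀ b ∈ Ico a ω₁, b < g b ∧ g b < ω₁) :
    ∃ s ∈ Ioo a ω₁, Tendsto (fun k => g^[k] a) atTop (𝓝 s) := by
  have hmem := iterate_mem_Ico ha hg
  have hmono : Monotone fun k => g^[k] a := monotone_nat_of_le_succ fun k => by
    rw [Function.iterate_succ_apply']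
    exact (hg _ (hmem k)).1.le
  refine ⟨⨆ k, g^[k] a, ⟨?_, iSup_lt_omega_one fun k => (hmem k).2⟩,
    tendsto_atTop_ciSup hmono bddAbove_of_small⟩
  exact (hg a ⟨le_rfl, ha⟩).1.trans_le (le_ciSup bddAbove_of_small 1)

theorem frequently_mem_sInter {S : Set (Set Ordinal.{u})} (hS : S.Countable)
    (hclosed : ∀ C ∈ S, IsClosed C) (hfreq : ∀ C ∈ S, ∃ᶠ γ in 𝓝[<] ω₁, γ ∈ C) :
    ∃ᶠ γ in 𝓝[<] ω₁, γ ∈ ⋂₀ S := by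
  simp only [nhdsLT_omega_one_basis.frequently_iff] at hfreq ⊢
  choose! c hc hcC using hfreq
  have : Countable S := hS.to_subtype
  set g : Ordinal.{u} → Ordinal.{u} := fun b => max (b + 1) (⨆ C : S, c C b)
  have hcg : ∀ C ∈ S, ∀ b, c C b ≤ g b := fun C hC b =>
    (le_ciSup bddAbove_of_small (⟨C, hC⟩ : S)).trans (le_max_right _ _)
  intro b hb
  have hg : ∀ b' ∈ Ico b ω₁, b' < g b' ∧ g b' < ω₁ := fun b' hb' =>
    ⟨(lt_add_one b').trans_le (le_max_left _ _),
      max_lt ((Cardinal.isSuccLimit_omega 1).add_one_lt hb'.2)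
        (iSup_lt_omega_one fun C => (hc C C.2 b' hb'.2).2)⟩
  obtain ⟨s, hs, hlim⟩ := exists_tendsto_iterate hb hg
  -- each `c C (g^[k] b)` lies between two consecutive iterates, so it also tends to `s`
  refine ⟨s, hs, fun C hC => (hclosed C hC).mem_of_tendsto
    (tendsto_of_tendsto_of_tendsto_of_le_of_le hlim (hlim.comp (tendsto_add_atTop_nat 1))
      (fun k => (hc C hC _ (iterate_mem_Ico hb hg k).2).1.le) fun k => ?_)
    (Eventually.of_forall fun k => hcC C hC _ (iterate_mem_Ico hb hg k).2)⟩
  simp only [Function.comp_apply, Function.iterate_succ_apply']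
  exact hcg C hC _

/-- The club filter on `ω₁`. A club is recorded as a closed subset of `Ordinal` that is cofinal
below `ω₁`; the factor `𝓝[<] ω₁` discards `ω₁` and everything above it. -/
noncomputable def clubFilter : Filter Ordinal.{u} :=
  countableGenerate {C | IsClosed C ∧ ∃ᶠ γ in 𝓝[<] ω₁, γ ∈ C} ⊓ 𝓝[<] ω₁

instance : CountableInterFilter clubFilter.{u} := by
  unfold clubFilter; infer_instance

instance : NeBot clubFilter.{u} := by
  refine inf_neBot_iff.2 fun s hs t ht => ?_
  obtain ⟨S, hSg, hSc, hsub⟩ := mem_countableGenerate_iff.1 hs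
  obtain ⟨γ, hγS, hγt⟩ := ((frequently_mem_sInter hSc (fun C hC => (hSg hC).1)
    fun C hC => (hSg hC).2).and_eventually ht).exists
  exact ⟨γ, hsub hγS, hγt⟩

theorem clubFilter_le_nhdsLT : clubFilter.{u} ≤ 𝓝[<] ω₁ := inf_le_right

theorem eventually_clubFilter_of_isClosed {C : Set Ordinal.{u}} (hC : IsClosed C)
    (hfreq : ∃ᶠ γ in 𝓝[<] ω₁, γ ∈ C) : ∀ᶠ γ in clubFilter, γ ∈ C :=
  mem_inf_of_left (mem_countableGenerate_iff.2 ⟨{C}, by simp [hC, hfreq], by simp, by simp⟩)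

section Hausdorff

variable {X : Type*} [TopologicalSpace X] [T2Space X] {f g : Ordinal.{u} → X}

theorem eventually_clubFilter_eq_of_frequently (hf : Continuous f) (hg : Continuous g)
    (hfreq : ∃ᶠ γ in 𝓝[<] ω₁, f γ = g γ) : ∀ᶠ γ in clubFilter, f γ = g γ :=
  eventually_clubFilter_of_isClosed (isClosed_eq hf hg) hfreq

theorem apply_omega_one_eq_of_eventually_eq (hf : Continuous f) {x : X}
    (h : ∀ᶠ γ in clubFilter, f γ = x) : f ω₁ = x :=
  tendsto_nhds_unique ((hf.tendsto _).mono_left (clubFilter_le_nhdsLT.trans nhdsWithin_le_nhds))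
    (tendsto_const_nhds.congr' (h.mono fun _ h => h.symm))

end Hausdorff

section Copy

variable {X : Type*} [TopologicalSpace X]

structure IsCocountableCopy (E : Ordinal.{u} → X) : Prop where
  continuous : Continuous E
  injOn : InjOn E (Iic ω₁)
  countable_compl_image : (E '' Iic ω₁)ᶜ.Countable

theorem exists_isCocountableCopy {A : Set X} (hA : Aᶜ.Countable)
    (φ : A ≃ₜ Iic (ω₁ : Ordinal.{u})) : ∃ E : Ordinal.{u} → X, IsCocountableCopy E := by
  refine ⟨fun o => φ.symm (projIic ω₁ o), ⟨?_, fun a ha b hb hab => ?_, hA.mono ?_⟩⟩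
  · exact continuous_subtype_val.comp
      (φ.symm.continuous.comp ((continuous_const.min continuous_id).subtype_mk _))
  · have h := φ.symm.injective (Subtype.val_injective hab)
    rw [projIic_of_mem ha, projIic_of_mem hb] at h
    exact congrArg Subtype.val h
  · refine compl_subset_compl.2 fun x hx => ⟨φ ⟨x, hx⟩, (φ ⟨x, hx⟩).2, ?_⟩
    simp [projIic_coe]

theorem IsCocountableCopy.apply_ne_apply_omega_one {E : Ordinal.{u} → X}
    (hE : IsCocountableCopy E) {γ : Ordinal.{u}} (hγ : γ < ω₁) : E γ ≠ E ω₁ :=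
  fun h => hγ.ne (hE.injOn hγ.le (mem_Iic.2 le_rfl) h)

theorem eventually_mem_countable_imp_eq [T1Space X] {h : Ordinal.{u} → X} (hh : Continuous h)
    {S : Set X} (hS : S.Countable) : ∀ᶠ γ in 𝓝[<] ω₁, h γ ∈ S → h γ = h ω₁ := by
  have : ∀ᶠ γ in 𝓝[<] ω₁, ∀ x ∈ S, x ≠ h ω₁ → h γ ≠ x :=
    (eventually_countable_ball hS).2 fun x _ => by
      by_cases hx : x = h ω₁
      · exact Eventually.of_forall fun _ h => absurd hx h
      · exact ((hh.tendsto ω₁).mono_left nhdsWithin_le_nhds).eventually_ne (Ne.symm hx) |>.mono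
          fun _ h _ => h
  filter_upwards [this] with γ hγ hmem
  by_contra hne
  exact hγ _ hmem hne rfl

variable [T2Space X]

theorem frequently_eq_of_eventually_mem_image {h E : Ordinal.{u} → X} (hh : Continuous h)
    (hE : Continuous E) (hmem : ∀ᶠ γ in 𝓝[<] ω₁, h γ ∈ E '' Iio ω₁)
    (hlarge : ∀ w < ω₁, ∀ᶠ γ in 𝓝[<] ω₁, h γ ∉ E '' Iic w) :
    ∃ᶠ γ in 𝓝[<] ω₁, h γ = E γ := by
  obtain ⟨θ, hθ, hθmem⟩ := nhdsLT_omega_one_basis.mem_iff.1 hmem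
  choose! pre hpre hEpre using fun γ (hγ : γ ∈ Ioo θ ω₁) => hθmem hγ
  choose! t ht htlarge using fun w hw => nhdsLT_omega_one_basis.mem_iff.1 (hlarge w hw)
  rw [nhdsLT_omega_one_basis.frequently_iff]
  intro b hb
  set a := max b θ + 1
  -- along the iterates of `g`, `pre` of each iterate lies between its two neighbours
  set g : Ordinal.{u} → Ordinal.{u} := fun β => max (max β (pre β)) (t β) + 1
  have hθa : θ < a := (le_max_right b θ).trans_lt (lt_add_one _)
  have ha : a < ω₁ := (Cardinal.isSuccLimit_omega 1).add_one_lt (max_lt hb hθ)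
  have hθβ : ∀ β ∈ Ico a ω₁, β ∈ Ioo θ ω₁ := fun β hβ => ⟨hθa.trans_le hβ.1, hβ.2⟩
  have hg : ∀ β ∈ Ico a ω₁, β < g β ∧ g β < ω₁ := fun β hβ =>
    ⟨(le_max_left _ _).trans_lt ((le_max_left _ _).trans_lt (lt_add_one _)),
      (Cardinal.isSuccLimit_omega 1).add_one_lt
        (max_lt (max_lt hβ.2 (hpre β (hθβ β hβ))) (ht β hβ.2))⟩
  obtain ⟨s, hs, hlim⟩ := exists_tendsto_iterate ha hg
  have hx := iterate_mem_Ico ha hg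
  have hbounds : ∀ k, g^[k] a ≤ pre (g^[k + 1] a) ∧ pre (g^[k + 1] a) ≤ g^[k + 2] a := by
    intro k
    have hk1 : g^[k + 1] a = g (g^[k] a) := Function.iterate_succ_apply' g k a
    have hk2 : g^[k + 2] a = g (g^[k + 1] a) := Function.iterate_succ_apply' g (k + 1) a
    constructor
    · have hnot := htlarge (g^[k] a) (hx k).2
        ⟨by rw [hk1]; exact (le_max_right _ _).trans_lt (lt_add_one _), (hx (k + 1)).2⟩
      by_contra! hlt
      exact hnot ⟨_, hlt.le, hEpre _ (hθβ _ (hx (k + 1)))⟩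
    · rw [hk2]
      exact ((le_max_right _ _).trans (le_max_left _ _)).trans (le_add_right le_rfl)
  have hpre_lim : Tendsto (fun k => pre (g^[k + 1] a)) atTop (𝓝 s) :=
    tendsto_of_tendsto_of_tendsto_of_le_of_le hlim (hlim.comp (tendsto_add_atTop_nat 2))
      (fun k => (hbounds k).1) fun k => (hbounds k).2
  have hE_lim : Tendsto (fun k => h (g^[k + 1] a)) atTop (𝓝 (E s)) :=
    ((hE.tendsto s).comp hpre_lim).congr fun k => hEpre _ (hθβ _ (hx (k + 1)))
  refine ⟨s, ⟨((le_max_left b θ).trans_lt (lt_add_one _)).trans hs.1, hs.2⟩, ?_⟩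
  exact tendsto_nhds_unique ((hh.tendsto s).comp (hlim.comp (tendsto_add_atTop_nat 1))) hE_lim

theorem IsCocountableCopy.eventually_eq_or {E : Ordinal.{u} → X} (hE : IsCocountableCopy E)
    {h : Ordinal.{u} → X} (hh : Continuous h) :
    (∀ᶠ γ in clubFilter, h γ = h ω₁) ∨ (h ω₁ = E ω₁ ∧ ∀ᶠ γ in clubFilter, h γ = E γ) := by
  have hrange := eventually_mem_countable_imp_eq hh hE.countable_compl_image
  have hsmall : ∀ w < ω₁, ∀ᶠ γ in 𝓝[<] ω₁, h γ ∈ E '' Iic w → h γ = h ω₁ := fun w hw =>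
    eventually_mem_countable_imp_eq hh ((countable_Iic_of_lt_omega_one hw).image E)
  by_cases hr : h ω₁ = E ω₁
  · by_cases hfreq : ∃ᶠ γ in 𝓝[<] ω₁, h γ = E ω₁
    · exact .inl (hr ▸ eventually_clubFilter_eq_of_frequently hh continuous_const hfreq)
    refine .inr ⟨hr, eventually_clubFilter_eq_of_frequently hh hE.continuous
      (frequently_eq_of_eventually_mem_image hh hE.continuous ?_ fun w hw => ?_)⟩
    · filter_upwards [hrange, not_frequently.1 hfreq] with γ h1 h2
      by_cases hin : h γ ∈ E '' Iic ω₁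
      · obtain ⟨o, ho, hEo⟩ := hin
        exact ⟨o, lt_of_le_of_ne ho fun ho' : o = ω₁ => h2 (by rw [← hEo, ho']), hEo⟩
      · exact absurd ((h1 hin).trans hr) h2
    · filter_upwards [hsmall w hw, not_frequently.1 hfreq] with γ h1 h2 h3
      exact h2 (hr ▸ h1 h3)
  · refine .inl (clubFilter_le_nhdsLT ?_)
    obtain ⟨N, N', hN, hN', hrN, hΩN', hdisj⟩ := t2_separation hr
    obtain ⟨ρ, hρ, hρN'⟩ := (mem_nhdsLE_iff_exists_Ioc_subset' (omega_pos 1)).1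
      (nhdsWithin_le_nhds (hE.continuous.continuousAt.preimage_mem_nhds (hN'.mem_nhds hΩN')))
    filter_upwards [hrange, hsmall ρ hρ,
      (hh.tendsto ω₁).mono_left nhdsWithin_le_nhds (hN.mem_nhds hrN)] with γ h1 h2 h3
    by_contra hne
    obtain ⟨o, ho, hEo⟩ : h γ ∈ E '' Iic ω₁ := not_not.1 (mt h1 hne)
    have hρo : ρ < o := lt_of_not_ge fun hoρ => hne (h2 ⟨o, hoρ, hEo⟩)
    exact disjoint_left.1 hdisj h3 (hEo ▸ hρN' ⟨hρo, ho⟩)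

end Copy

section Separable

variable {X : Type*} [TopologicalSpace X] [T2Space X] {E : Ordinal.{u} → X} {R : X → X → X}
  {n : ℕ} {μ : (Fin n → X) → X}

theorem IsCocountableCopy.exists_eventually_split (hE : IsCocountableCopy E)
    (hR : ∀ y, Continuous (R · y)) {Q : Set X} (hQ : Q.Countable) :
    ∃ P ⊆ Q, (∀ᶠ β in clubFilter, ∀ q ∈ P, R (E β) q = R (E ω₁) q) ∧
      (∀ q ∈ Q \ P, R (E ω₁) q = E ω₁) ∧ ∀ᶠ β in clubFilter, ∀ q ∈ Q \ P, R (E β) q = E β := by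
  set P := {q ∈ Q | ∀ᶠ β in clubFilter, R (E β) q = R (E ω₁) q}
  have key : ∀ q ∈ Q \ P, R (E ω₁) q = E ω₁ ∧ ∀ᶠ β in clubFilter, R (E β) q = E β :=
    fun q hq => (hE.eventually_eq_or ((hR q).comp hE.continuous)).resolve_left
      fun h => hq.2 ⟨hq.1, h⟩
  exact ⟨P, sep_subset _ _, (eventually_countable_ball (hQ.mono (sep_subset _ _))).2
    fun q hq => hq.2, fun q hq => (key q hq).1,
    (eventually_countable_ball (hQ.mono sdiff_subset)).2 fun q hq => (key q hq).2⟩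

theorem IsCocountableCopy.eventually_mean_eq_or (hE : IsCocountableCopy E) (hdc : DiagCts μ)
    (hm : IsNMean μ) (k : ℕ) :
    (∀ᶠ γ in clubFilter, (μ fun i => if (i : ℕ) < k then E γ else E ω₁) = E ω₁) ∨
      ∀ᶠ γ in clubFilter, (μ fun i => if (i : ℕ) < k then E γ else E ω₁) = E γ := by
  have h := hE.eventually_eq_or
    ((hdc.continuous_ite (fun i => (i : ℕ) < k) fun _ => E ω₁).comp hE.continuous)
  simp only [Function.comp_apply, ite_self, hm.1] at h
  exact h.imp id And.right

variable [TopologicalSpace.SeparableSpace X]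

theorem IsCocountableCopy.not_eventually_neutral (hE : IsCocountableCopy E)
    (hR₁ : ∀ y, Continuous (R · y)) (hR₂ : ∀ x, Continuous (R x)) :
    ¬ ∀ᶠ γ in clubFilter, R (E γ) (E ω₁) = E γ ∧ R (E ω₁) (E γ) = E γ := by
  intro hneutral
  obtain ⟨Q, hQc, hQd⟩ := TopologicalSpace.exists_countable_dense X
  obtain ⟨P, -, hP, hQP, -⟩ := hE.exists_eventually_split hR₁ hQc
  have hlt : ∀ᶠ γ in clubFilter, γ < ω₁ := clubFilter_le_nhdsLT self_mem_nhdsWithin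
  obtain ⟨β, hβP, hβn, hβ⟩ := (hP.and (hneutral.and hlt)).exists
  have hβconst : ∀ᶠ γ in clubFilter, R (E β) (E γ) = E β := by
    rcases hE.eventually_eq_or ((hR₂ (E β)).comp hE.continuous) with h | h
    · simpa only [Function.comp_apply, hβn.1] using h
    · exact absurd (hβn.1.symm.trans h.1) (hE.apply_ne_apply_omega_one hβ)
  obtain ⟨δ, hRβδ, hδn, hδ, hβδ⟩ := (hβconst.and (hneutral.and
    (hlt.and (clubFilter_le_nhdsLT (Ioo_mem_nhdsLT hβ))))).exists
  rcases hQd.mem_closure_or_mem_closure_diff P (E δ) with hδP | hδP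
  · have h := EqOn.closure (fun q hq => hβP q hq) (hR₂ _) (hR₂ _) hδP
    rw [hRβδ, hδn.2] at h
    exact hβδ.1.ne (hE.injOn hβ.le hδ.le h)
  · have h := EqOn.closure (g := fun _ => E ω₁) (fun q hq => hQP q hq) (hR₂ _) continuous_const hδP
    exact hE.apply_ne_apply_omega_one hδ (hδn.2.symm.trans h)

theorem IsCocountableCopy.not_eventually_absorbing (hE : IsCocountableCopy E)
    (hR₁ : ∀ y, Continuous (R · y)) (hR₂ : ∀ x, Continuous (R x)) :
    ¬ ∀ᶠ γ in clubFilter,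
      R (E γ) (E ω₁) = E ω₁ ∧ R (E ω₁) (E γ) = E ω₁ ∧ R (E γ) (E γ) = E γ := by
  intro habs
  obtain ⟨Q, hQc, hQd⟩ := TopologicalSpace.exists_countable_dense X
  obtain ⟨P, -, hP, -, hQP⟩ := hE.exists_eventually_split hR₁ hQc
  have hlt : ∀ᶠ γ in clubFilter, γ < ω₁ := clubFilter_le_nhdsLT self_mem_nhdsWithin
  have hgood := hP.and (hQP.and (habs.and hlt))
  have hclosure : ∀ᶠ γ in clubFilter, E γ ∈ closure (Q \ P) := by
    filter_upwards [hgood] with γ hγgood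
    obtain ⟨hγP, -, hγa, hγ⟩ := hγgood
    refine (hQd.mem_closure_or_mem_closure_diff P (E γ)).resolve_left fun hγP' => ?_
    have h := EqOn.closure (fun q hq => hγP q hq) (hR₂ _) (hR₂ _) hγP'
    rw [hγa.2.2, hγa.2.1] at h
    exact hE.apply_ne_apply_omega_one hγ h
  obtain ⟨β, -, hβQP, hβa, hβ⟩ := hgood.exists
  have hβconst : ∀ᶠ γ in clubFilter, R (E β) (E γ) = E β := hclosure.mono fun γ hγ =>
    EqOn.closure (g := fun _ => E β) (fun q hq => hβQP q hq) (hR₂ _) continuous_const hγ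
  have h := apply_omega_one_eq_of_eventually_eq ((hR₂ _).comp hE.continuous) hβconst
  exact hE.apply_ne_apply_omega_one hβ (h.symm.trans hβa.1)

theorem IsCocountableCopy.not_eventually_mean_lt_one_eq (hE : IsCocountableCopy E)
    (hdc : DiagCts μ) (hm : IsNMean μ) (hn : 2 ≤ n) :
    ¬ ∀ᶠ γ in clubFilter, (μ fun i => if (i : ℕ) < 1 then E γ else E ω₁) = E γ := by
  intro h
  refine hE.not_eventually_neutral
    (R := fun x y => μ fun i => if (i : ℕ) < 1 then x else if (i : ℕ) < 2 then y else E ω₁)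
    (fun y => hdc.continuous_ite _ _) (fun x => hdc.continuous_ite_ite _ _ _ _) ?_
  filter_upwards [h] with γ hγ
  exact ⟨by simpa only [ite_self] using hγ, (hm.apply_ite_lt_one_ite hn _ _).trans hγ⟩

theorem IsCocountableCopy.not_eventually_mean_absorbing (hE : IsCocountableCopy E)
    (hdc : DiagCts μ) (hm : IsNMean μ) {k : ℕ} (hk : 1 ≤ k) (hkn : k ≤ n)
    (hone : ∀ᶠ γ in clubFilter, (μ fun i => if (i : ℕ) < 1 then E γ else E ω₁) = E ω₁)
    (hpred : ∀ᶠ γ in clubFilter, (μ fun i => if (i : ℕ) < k - 1 then E γ else E ω₁) = E ω₁)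
    (hself : ∀ᶠ γ in clubFilter, (μ fun i => if (i : ℕ) < k then E γ else E ω₁) = E γ) :
    False := by
  refine hE.not_eventually_absorbing
    (R := fun x y => μ fun i => if (i : ℕ) < 1 then x else if (i : ℕ) < k then y else E ω₁)
    (fun y => hdc.continuous_ite _ _) (fun x => hdc.continuous_ite_ite _ _ _ _) ?_
  filter_upwards [hone, hpred, hself] with γ hγone hγpred hγself
  refine ⟨by simpa only [ite_self] using hγone, (hm.apply_ite_lt_one_ite hkn _ _).trans hγpred,
    Eq.trans ?_ hγself⟩
  congr 1
  funext i
  split_ifs <;> first | rfl | (exfalso; omega)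

end Separable

end Ordinal

theorem no_diag_cts_n_mean (X : Type*) [TopologicalSpace X] [T2Space X]
    [TopologicalSpace.SeparableSpace X]
    (A : Set X) (hAcc : (Aᶜ).Countable)
    (hA : Nonempty (A ≃ₜ (Set.Iic (ω_ 1) : Set Ordinal))) :
    ∀ n : ℕ, 2 ≤ n → ¬ ∃ μ : (Fin n → X) → X, DiagCts μ ∧ IsNMean μ := by
  classical
  rintro n hn ⟨μ, hdc, hm⟩
  obtain ⟨E, hE⟩ := exists_isCocountableCopy hAcc hA.some
  have hn1 : ∀ᶠ γ in clubFilter,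
      (μ fun i : Fin n => if (i : ℕ) < n - 1 + 1 then E γ else E ω₁) = E γ :=
    Eventually.of_forall fun γ =>
      (congrArg μ (funext fun i => if_pos (by have := i.2; omega))).trans (hm.1 _)
  have hid : ∃ j, ∀ᶠ γ in clubFilter,
      (μ fun i : Fin n => if (i : ℕ) < j + 1 then E γ else E ω₁) = E γ := ⟨n - 1, hn1⟩
  have hle : Nat.find hid ≤ n - 1 := Nat.find_min' hid hn1
  have hΩ : ∀ l < Nat.find hid, ∀ᶠ γ in clubFilter,
      (μ fun i : Fin n => if (i : ℕ) < l + 1 then E γ else E ω₁) = E ω₁ :=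
    fun l hl => (hE.eventually_mean_eq_or hdc hm (l + 1)).resolve_right (Nat.find_min hid hl)
  have hspec := Nat.find_spec hid
  rcases hj : Nat.find hid with _ | j <;> rw [hj] at hspec hΩ hle
  · exact hE.not_eventually_mean_lt_one_eq hdc hm hn hspec
  · exact hE.not_eventually_mean_absorbing hdc hm (by omega) (by omega)
      (hΩ 0 (by omega)) (hΩ j (by omega)) hspec
end

section
/- If a separable Hausdorff topological space X contains a cocountable subset homeomorphic to [0, ω₁], then X admits no separately continuous almost 2-mean, where an almost 2-mean is a symmetric map μ : X² → X such that the set {x ∈ X : μ(x,x) ≠ x} is at most countable. -/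
open Ordinal Topology

/-- An almost 2-mean: a symmetric binary operation which is idempotent off a
countable set. -/
def IsTwoAMean {X : Type*} (μ : X → X → X) : Prop :=
  (∀ x y, μ x y = μ y x) ∧ {x : X | μ x x ≠ x}.Countable

/-!
Restricted to the copy of `[0, ω₁)`, each map `μ y` is continuous, and a continuous map
`F : [0, ω₁) → X` is constant on a club or equal to the inclusion on a club: if no value is
taken cofinally, `F` eventually avoids the countable set `X \ [0, ω₁)`, so it factors through an
unbounded map `g : [0, ω₁) → [0, ω₁)`, and at the closure points of `g` it meets the inclusion.
Intersecting these clubs over a countable dense set `D` gives one club `E`. Writing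
`D = D₀ ∪ D₁` according to the alternative, `μ z` is constant on `E` for `z ∈ closure D₀` and
fixes `E` for `z ∈ closure D₁`; by symmetry and idempotency each closure contains at most one
idempotent point of `E`. As `X = closure D₀ ∪ closure D₁`, all but two points of the uncountable
copy of `E` in `X` are non-idempotent.
-/

open Set Filter Cardinal Order Function

universe u

section UncountableCofinality

variable {α : Type*} [LinearOrder α]

theorem IsCofinal.not_countable (hα : ℵ₀ < cof α) {s : Set α} (hs : IsCofinal s) :
    ¬ s.Countable :=
  fun hc => (hα.trans_le (cof_le hs)).not_ge (le_aleph0_iff_set_countable.2 hc)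

theorem countableInterFilter_atTop (hα : ℵ₀ < cof α) :
    CountableInterFilter (atTop : Filter α) := by
  refine ⟨fun S hS hmem => ?_⟩
  have : Nonempty α := by
    by_contra h
    simp [not_nonempty_iff.1 h] at hα
  choose! a ha using fun s hs => mem_atTop_sets.1 (hmem s hs)
  obtain ⟨m, hm⟩ := not_isCofinal_iff.1 fun h => h.not_countable hα (hS.image a)
  exact mem_atTop_sets.2
    ⟨m, fun b hb s hs => ha s hs b ((hm _ (mem_image_of_mem a hs)).le.trans hb)⟩

theorem IsClosed.isClub [TopologicalSpace α] [OrderTopology α] {s : Set α} (hs : IsClosed s)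
    (hc : IsCofinal s) : IsClub s :=
  ⟨fun _ hds hd _ _ ha => hs.closure_subset_iff.2 hds (ha.mem_closure hd), hc⟩

end UncountableCofinality

section CountableOrdinals

theorem aleph0_lt_cof_Iio_omega_one : ℵ₀ < Order.cof (Iio (ω₁ : Ordinal.{u})) := by
  simp [Ordinal.cof_Iio]

instance : Nonempty (Iio (ω₁ : Ordinal.{u})) :=
  ⟨⟨0, omega_pos 1⟩⟩

instance : NoMaxOrder (Iio (ω₁ : Ordinal.{u})) :=
  ⟨fun a => ⟨⟨succ a.1, (isSuccLimit_omega 1).succ_lt a.2⟩, lt_succ a.1⟩⟩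

instance : CountableInterFilter (atTop : Filter (Iio (ω₁ : Ordinal.{u}))) :=
  countableInterFilter_atTop aleph0_lt_cof_Iio_omega_one

theorem countable_Iic_of_lt_omega_one (β : Iio (ω₁ : Ordinal.{u})) : (Iic β).Countable := by
  have hβ : (Iio (succ β.1)).Countable := by
    rw [← le_aleph0_iff_set_countable, Cardinal.mk_Iio_ordinal, lift_le_aleph0,
      ← lt_aleph_one_iff, ← lt_ord, ord_aleph]
    exact (isSuccLimit_omega 1).succ_lt β.2
  exact (hβ.preimage Subtype.val_injective).mono fun γ (hγ : γ ≤ β) =>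
    show γ.1 < succ β.1 from lt_succ_of_le (show γ.1 ≤ β.1 from hγ)

theorem Monotone.exists_tendsto_Iio_omega_one {a : ℕ → Iio (ω₁ : Ordinal.{u})}
    (ha : Monotone a) : ∃ L, Tendsto a atTop (𝓝 L) := by
  refine ⟨⟨⨆ n, (a n).1, iSup_lt_omega_one fun n => (a n).2⟩, tendsto_atTop_isLUB ha ?_⟩
  refine ⟨?_, fun b hb => ?_⟩
  · rintro _ ⟨n, rfl⟩
    exact le_ciSup (f := fun n => (a n).1) Ordinal.bddAbove_of_small n
  · exact show (⨆ n, (a n).1) ≤ b.1 from ciSup_le fun n => hb (mem_range_self n)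

end CountableOrdinals

section Dichotomy

variable {X : Type*} [TopologicalSpace X] [T2Space X]

theorem isCofinal_setOf_eq_of_eventuallyEq_comp {F φ : Iio (ω₁ : Ordinal.{u}) → X}
    (hF : Continuous F) (hφ : Continuous φ) {g : Iio (ω₁ : Ordinal.{u}) → Iio ω₁}
    (hg : Tendsto g atTop atTop) (hFg : F =ᶠ[atTop] φ ∘ g) :
    IsCofinal {α | F α = φ α} := by
  intro β
  obtain ⟨δ, hδ⟩ := eventually_atTop.1 hFg
  have hstep : ∀ ξ : Iio (ω₁ : Ordinal.{u}), ∃ ζ, ξ < ζ ∧ (∀ α ≤ ξ, g α < ζ) ∧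
      ∀ α ≥ ζ, ξ < g α := by
    intro ξ
    obtain ⟨η, hη⟩ := eventually_atTop.1 (hg.eventually_gt_atTop ξ)
    obtain ⟨ζ, hζ⟩ := not_isCofinal_iff.1 fun h => h.not_countable aleph0_lt_cof_Iio_omega_one
      ((((countable_Iic_of_lt_omega_one ξ).image g).insert ξ).insert η)
    exact ⟨ζ, hζ ξ (by simp), fun α hα => hζ _ (by simp [mem_image_of_mem g (mem_Iic.2 hα)]),
      fun α hα => hη α ((hζ η (by simp)).le.trans hα)⟩
  choose step hgt hbelow habove using hstep
  set a : ℕ → Iio (ω₁ : Ordinal.{u}) := fun n => step^[n] (max β δ)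
  have ha_succ (n : ℕ) : a (n + 1) = step (a n) := iterate_succ_apply' step n _
  have ha : StrictMono a := strictMono_nat_of_lt_succ fun n => ha_succ n ▸ hgt _
  obtain ⟨L, hL⟩ := ha.monotone.exists_tendsto_Iio_omega_one
  have hδa (n : ℕ) : δ ≤ a n := (le_max_right β δ).trans (ha.monotone n.zero_le)
  -- `a n < g (a (n + 1)) < a (n + 2)` by the choice of `step`
  have hga : Tendsto (fun n => g (a (n + 1))) atTop (𝓝 L) :=
    tendsto_of_tendsto_of_tendsto_of_le_of_le hL (hL.comp (tendsto_add_atTop_nat 2))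
      (fun n => (habove _ _ (ha_succ n).ge).le)
      (fun n => ((hbelow _ _ le_rfl).trans_eq (ha_succ (n + 1)).symm).le)
  have hFa : Tendsto (fun n => F (a (n + 1))) atTop (𝓝 (F L)) :=
    (hF.tendsto L).comp (hL.comp (tendsto_add_atTop_nat 1))
  refine ⟨L, ?_, (le_max_left β δ).trans (ha.monotone.ge_of_tendsto hL 0)⟩
  exact tendsto_nhds_unique hFa
    (((hφ.tendsto L).comp hga).congr fun n => (hδ _ (hδa (n + 1))).symm)

theorem exists_isClub_eq_const_or_eq_s2 {φ : Iio (ω₁ : Ordinal.{u}) → X} (hφ : Continuous φ)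
    (hφr : (range φ)ᶜ.Countable) {F : Iio (ω₁ : Ordinal.{u}) → X} (hF : Continuous F) :
    ∃ S : Set (Iio (ω₁ : Ordinal.{u})), IsClub S ∧
      ((∃ c, ∀ α ∈ S, F α = c) ∨ ∀ α ∈ S, F α = φ α) := by
  by_cases hc : ∃ c, ∃ᶠ α in atTop, F α = c
  · obtain ⟨c, hc⟩ := hc
    refine ⟨F ⁻¹' {c}, (isClosed_singleton.preimage hF).isClub fun β => ?_,
      .inl ⟨c, fun _ => id⟩⟩
    obtain ⟨α, hβα, hα⟩ := frequently_atTop.1 hc β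
    exact ⟨α, hα, hβα⟩
  push Not at hc
  have hrare : ∀ C : Set X, C.Countable → ∀ᶠ α in atTop, F α ∉ C := fun C hC =>
    ((eventually_countable_ball hC).2 fun c _ => hc c).mono fun _ h hFC => h _ hFC rfl
  let g := invFun φ ∘ F
  have hFg : F =ᶠ[atTop] φ ∘ g :=
    (hrare _ hφr).mono fun α hα => (invFun_eq (not_not.1 hα)).symm
  have hg : Tendsto g atTop atTop := tendsto_atTop.2 fun β => by
    filter_upwards [hrare _ ((countable_Iic_of_lt_omega_one β).image φ), hFg] with α hα hFα
    by_contra! hlt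
    exact hα ⟨g α, hlt.le, hFα.symm⟩
  exact ⟨_, (isClosed_eq hF hφ).isClub (isCofinal_setOf_eq_of_eventuallyEq_comp hF hφ hg hFg),
    .inr fun _ => id⟩

end Dichotomy

section SymmetricOperation

variable {X : Type*} {μ : X → X → X}

theorem inter_subsingleton_of_absorbing (hsymm : ∀ x y, μ x y = μ y x) {P K : Set X}
    (hK : ∀ z ∈ K, ∀ p ∈ P, μ z p = p) : (P ∩ K).Subsingleton := by
  rintro p ⟨hp, hpK⟩ q ⟨hq, hqK⟩
  calc p = μ q p := (hK q hqK p hp).symm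
    _ = μ p q := hsymm q p
    _ = q := hK p hpK q hq

theorem inter_subsingleton_of_constant (hsymm : ∀ x y, μ x y = μ y x) {P K : Set X}
    (hK : ∀ z ∈ K, ∀ p ∈ P, ∀ q ∈ P, μ z p = μ z q) :
    (P ∩ {p | μ p p = p} ∩ K).Subsingleton := by
  rintro p ⟨⟨hp, hpp⟩, hpK⟩ q ⟨⟨hq, hqq⟩, hqK⟩
  calc p = μ p p := hpp.symm
    _ = μ p q := hK p hpK p hp q hq
    _ = μ q p := hsymm p q
    _ = μ q q := hK q hqK p hp q hq
    _ = q := hqq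

theorem finite_inter_setOf_idempotent [TopologicalSpace X] [T2Space X] (hμ : SepCts μ)
    (hsymm : ∀ x y, μ x y = μ y x) {D P : Set X} (hD : Dense D)
    (hdich : ∀ d ∈ D, (∀ p ∈ P, ∀ q ∈ P, μ d p = μ d q) ∨ ∀ p ∈ P, μ d p = p) :
    (P ∩ {p | μ p p = p}).Finite := by
  set D₀ := {d ∈ D | ∀ p ∈ P, ∀ q ∈ P, μ d p = μ d q}
  set D₁ := {d ∈ D | ∀ p ∈ P, μ d p = p}
  have h₀ : ∀ z ∈ closure D₀, ∀ p ∈ P, ∀ q ∈ P, μ z p = μ z q := fun z hz p hp q hq =>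
    closure_minimal (fun d hd => hd.2 p hp q hq) (isClosed_eq (hμ p).2 (hμ q).2) hz
  have h₁ : ∀ z ∈ closure D₁, ∀ p ∈ P, μ z p = p := fun z hz p hp =>
    closure_minimal (fun d hd => hd.2 p hp) (isClosed_eq (hμ p).2 continuous_const) hz
  have hcover : Set.univ ⊆ closure D₀ ∪ closure D₁ := by
    rw [← hD.closure_eq, ← closure_union]
    exact closure_mono fun d hd => (hdich d hd).imp (⟨hd, ·⟩) (⟨hd, ·⟩)
  refine ((inter_subsingleton_of_constant hsymm h₀).finite.union
    (inter_subsingleton_of_absorbing hsymm h₁).finite).subset fun p hp => ?_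
  rcases hcover (mem_univ p) with hp₀ | hp₁
  exacts [.inl ⟨hp, hp₀⟩, .inr ⟨hp.1, hp₁⟩]

end SymmetricOperation

theorem exists_continuous_injective_of_homeomorph_Iic_omega_one {X : Type*}
    [TopologicalSpace X] {A : Set X} (hA : Aᶜ.Countable) (e : A ≃ₜ Iic (ω₁ : Ordinal.{u})) :
    ∃ φ : Iio (ω₁ : Ordinal.{u}) → X, Continuous φ ∧ Injective φ ∧ (range φ)ᶜ.Countable := by
  refine ⟨fun α => e.symm (inclusion Iio_subset_Iic_self α), by fun_prop,
    Subtype.val_injective.comp (e.symm.injective.comp (inclusion_injective _)), ?_⟩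
  refine (hA.union (countable_singleton (e.symm ⟨ω₁, mem_Iic.2 le_rfl⟩ : X))).mono fun x hx => ?_
  by_contra! h
  obtain ⟨hx_top, hxA⟩ : x ≠ e.symm ⟨ω₁, mem_Iic.2 le_rfl⟩ ∧ x ∈ A := by simpa using h
  have hlt : (e ⟨x, hxA⟩ : Ordinal) < ω₁ :=
    (e ⟨x, hxA⟩).2.lt_of_ne fun heq => hx_top <| by
      rw [show (⟨ω₁, _⟩ : Iic ω₁) = e ⟨x, hxA⟩ from Subtype.ext heq.symm, e.symm_apply_apply]
  exact hx ⟨⟨_, hlt⟩, by simp [inclusion]⟩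

theorem no_sep_cts_two_amean (X : Type*) [TopologicalSpace X] [T2Space X]
    [TopologicalSpace.SeparableSpace X]
    (A : Set X) (hAcc : (Aᶜ).Countable)
    (hA : Nonempty (A ≃ₜ (Set.Iic (ω_ 1) : Set Ordinal))) :
    ¬ ∃ μ : X → X → X, SepCts μ ∧ IsTwoAMean μ := by
  rintro ⟨μ, hμ, hsymm, hN⟩
  obtain ⟨e⟩ := hA
  obtain ⟨φ, hφ, hφi, hφr⟩ := exists_continuous_injective_of_homeomorph_Iic_omega_one hAcc e
  obtain ⟨D, hDc, hD⟩ := TopologicalSpace.exists_countable_dense X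
  choose S hS hSF using fun y => exists_isClub_eq_const_or_eq_s2 hφ hφr ((hμ y).1.comp hφ)
  have : Countable D := hDc.to_subtype
  set E := ⋂ d : D, S d
  have hE : IsClub E := .iInter_of_countable aleph0_lt_cof_Iio_omega_one.ne' fun d => hS d
  have hfin : (φ '' E ∩ {p | μ p p = p}).Finite := by
    refine finite_inter_setOf_idempotent hμ hsymm hD fun d hd => ?_
    have hES : E ⊆ S d := iInter_subset (fun d : D => S d) ⟨d, hd⟩
    simp only [forall_mem_image]
    exact (hSF d).imp (fun ⟨c, hc⟩ α hα β hβ => (hc α (hES hα)).trans (hc β (hES hβ)).symm)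
      fun h α hα => h α (hES hα)
  have hφE : (φ '' E).Countable :=
    (hfin.countable.union hN).mono fun p hp => (em (μ p p = p)).imp (⟨hp, ·⟩) id
  exact hE.isCofinal.not_countable aleph0_lt_cof_Iio_omega_one
    (countable_of_injective_of_countable_image hφi.injOn hφE)
end
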